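/- Let β > 0, m ∈ ℝ, let γ₁,…,γ_N be distinct positive real numbers and c₁,…,c_N ∈ ℂ. Define G(x) = m − Σ_{k=1}^N 2 Re( c_k e^{iγ_k log x} / (β + iγ_k) ) for x > 1. Then G admits a limiting logarithmic distribution μ; moreover μ is the pushforward of the normalized Haar measure on A(γ₁/2π,…,γ_N/2π) ⊆ 𝕋^N under the map (θ₁,…,θ_N) ↦ m − Σ_{k=1}^N 2 Re( c_k e^{2πiθ_k} / (β + iγ_k) ). -/

import Mathlib

/-!
The closure `A` of the orbit `y ↦ y γ` is a compact subgroup of the torus, so it carries a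
normalized Haar measure `ω`. Along the orbit the character `χₙ` of the torus is
`y ↦ exp (2πi ⟨n, γ⟩ y)`, whose time average tends to `1` if `⟨n, γ⟩ = 0` and to `0` otherwise.
Its integral against `ω` is the same number: either `χₙ` is identically `1` on `A`, or it takes the
value `-1` at a point of `A`, under translation by which `ω` is invariant. The differences between
time averages and `ω`-averages are uniformly Lipschitz linear functionals on `C(𝕋ᴺ, ℂ)`, so the
functions on which they tend to `0` form a closed subspace; it contains the trigonometric
polynomials, which are dense by Stone–Weierstrass. Since `G (eʸ) = f (y γ / 2π)` for the map `f`
of the statement, applying this to `g ∘ f` gives the theorem.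
-/

open MeasureTheory Filter Topology Complex

noncomputable section

/-- The one-parameter group homomorphism `y ↦ (y γ₁, …, y γ_N)` from `ℝ` to the torus
`𝕋^N = (ℝ/ℤ)^N`. -/
def orbitHom {N : ℕ} (γ : Fin N → ℝ) : ℝ →+ (Fin N → AddCircle (1 : ℝ)) where
  toFun y := fun i => ((y * γ i : ℝ) : AddCircle (1 : ℝ))
  map_zero' := by funext i; simp
  map_add' x y := by funext i; simp [add_mul]

/-- `A(γ)`: the topological closure in `𝕋^N` of the one-parameter subgroup
`{(yγ₁,…,yγ_N) mod ℤ^N : y ∈ ℝ}`. -/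
def torusSubgroup {N : ℕ} (γ : Fin N → ℝ) : AddSubgroup (Fin N → AddCircle (1 : ℝ)) :=
  (orbitHom γ).range.topologicalClosure

/-- `ω` is the normalized Haar measure of the (compact) subgroup `A`:
a probability measure supported on `A` and invariant under translation by elements of `A`. -/
def IsHaarOn {G : Type*} [AddCommGroup G] [TopologicalSpace G] [MeasurableSpace G]
    (A : AddSubgroup G) (ω : Measure G) : Prop :=
  IsProbabilityMeasure ω ∧ ω ((A : Set G)ᶜ) = 0 ∧ ∀ a ∈ A, ω.map (· + a) = ω

/-- `F : ℝ → ℝ` admits the Borel probability measure `μ` as limiting logarithmic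
distribution: for every bounded Lipschitz `g : ℝ → ℝ`,
`(1/Y) ∫₂^Y g(F(e^y)) dy → ∫ g dμ` as `Y → ∞`. -/
def HasLimitingLogDistribution (F : ℝ → ℝ) (μ : Measure ℝ) : Prop :=
  IsProbabilityMeasure μ ∧
  ∀ g : ℝ → ℝ, (∃ C, LipschitzWith C g) → (∃ B, ∀ x, |g x| ≤ B) →
    Tendsto (fun Y : ℝ => (1 / Y) * ∫ y in (2:ℝ)..Y, g (F (Real.exp y)))
      atTop (𝓝 (∫ t, g t ∂μ))

section HaarOn

variable {G : Type*} [AddCommGroup G] [TopologicalSpace G] [MeasurableSpace G]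

theorem exists_isHaarOn [IsTopologicalAddGroup G] [CompactSpace G] [T2Space G] [BorelSpace G]
    {A : AddSubgroup G} (hA : IsClosed (A : Set G)) : ∃ ω : Measure G, IsHaarOn A ω := by
  have : CompactSpace A := isCompact_iff_compactSpace.mp hA.isCompact
  set ν := Measure.addHaarMeasure (⊤ : TopologicalSpace.PositiveCompacts A)
  refine ⟨ν.map Subtype.val, ⟨?_⟩, ?_, fun a ha => ?_⟩
  · rw [Measure.map_apply measurable_subtype_coe MeasurableSet.univ, Set.preimage_univ]
    simpa using Measure.addHaarMeasure_self (K₀ := (⊤ : TopologicalSpace.PositiveCompacts A))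
  · rw [Measure.map_apply measurable_subtype_coe hA.measurableSet.compl,
      Set.preimage_compl, Subtype.coe_preimage_self, Set.compl_univ, measure_empty]
  · have : (· + a) ∘ (Subtype.val : A → G) = Subtype.val ∘ (· + (⟨a, ha⟩ : A)) := rfl
    rw [Measure.map_map (by fun_prop) measurable_subtype_coe, this,
      ← Measure.map_map measurable_subtype_coe (by fun_prop), map_add_right_eq_self]

variable {A : AddSubgroup G} {ω : Measure G}

theorem IsHaarOn.integral_eq_of_eqOn {E : Type*} [NormedAddCommGroup E] [NormedSpace ℝ E]
    [CompleteSpace E] (hω : IsHaarOn A ω) {f : G → E} {c : E} (hf : Set.EqOn f (fun _ => c) A) :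
    ∫ x, f x ∂ω = c := by
  have := hω.1
  have hae : f =ᵐ[ω] fun _ => c := Filter.mem_of_superset (mem_ae_iff.mpr hω.2.1) hf
  rw [integral_congr_ae hae, integral_const, probReal_univ, one_smul]

theorem IsHaarOn.integral_eq_zero_of_add_eq_mul [MeasurableAdd G] (hω : IsHaarOn A ω)
    {f : G → ℂ} (hf : AEStronglyMeasurable f ω) {a : G} (ha : a ∈ A) {c : ℂ} (hc : c ≠ 1)
    (hfa : ∀ x, f (x + a) = f x * c) : ∫ x, f x ∂ω = 0 := by
  have hinv := hω.2.2 a ha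
  have hshift : ∫ x, f x ∂ω = (∫ x, f x ∂ω) * c := by
    conv_lhs => rw [← hinv]
    rw [integral_map (measurable_add_const a).aemeasurable (by rwa [hinv])]
    simp only [hfa, integral_mul_const]
  have : (∫ x, f x ∂ω) * (1 - c) = 0 := by linear_combination hshift
  exact (mul_eq_zero.mp this).resolve_right (sub_ne_zero.mpr hc.symm)

end HaarOn

theorem tendsto_inv_mul_integral_exp_mul_I (t a : ℝ) :
    Tendsto (fun Y : ℝ => (Y : ℂ)⁻¹ * ∫ y in a..Y, cexp (t * y * I)) atTop
      (𝓝 (if t = 0 then 1 else 0)) := by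
  split_ifs with ht
  · have hY : ∀ᶠ Y : ℝ in atTop,
        ((1 - a * Y⁻¹ : ℝ) : ℂ) = (Y : ℂ)⁻¹ * ∫ y in a..Y, cexp (t * y * I) := by
      filter_upwards [eventually_ne_atTop 0] with Y hY
      simp only [ofReal_sub, ofReal_one, ofReal_mul, ofReal_inv, ht, ofReal_zero, zero_mul,
        exp_zero, intervalIntegral.integral_const, real_smul, mul_one]
      field_simp [ofReal_ne_zero.mpr hY]
    refine Tendsto.congr' hY (tendsto_ofReal_iff.mpr ?_)
    simpa using tendsto_const_nhds.sub (tendsto_inv_atTop_zero.const_mul a)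
  · have htI : (t : ℂ) * I ≠ 0 := mul_ne_zero (ofReal_ne_zero.mpr ht) I_ne_zero
    have hbound : ∀ Y : ℝ, ‖(Y : ℂ)⁻¹ * ∫ y in a..Y, cexp (t * y * I)‖ ≤ |Y|⁻¹ * (2 / |t|) := by
      intro Y
      have hexp : ∀ s : ℝ, ‖cexp (t * I * s)‖ = 1 := fun s => by
        rw [mul_right_comm]; exact_mod_cast norm_exp_ofReal_mul_I (t * s)
      simp_rw [mul_right_comm _ _ I]
      rw [norm_mul, integral_exp_mul_complex htI, norm_div, norm_inv, norm_real,
        Real.norm_eq_abs, norm_mul, norm_I, mul_one, norm_real, Real.norm_eq_abs]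
      gcongr
      exact (norm_sub_le _ _).trans (by rw [hexp, hexp]; norm_num)
    refine squeeze_zero_norm hbound ?_
    simpa using (tendsto_inv_atTop_zero.comp tendsto_abs_atTop_atTop).mul_const (2 / |t|)

open UnitAddTorus

section Torus

variable {N : ℕ} (γ : Fin N → ℝ)

theorem continuous_orbitHom : Continuous (orbitHom γ) :=
  continuous_pi fun _ => continuous_quotient_mk'.comp (continuous_mul_const _)

theorem orbitHom_mem_torusSubgroup (y : ℝ) : orbitHom γ y ∈ torusSubgroup γ :=
  (orbitHom γ).range.le_topologicalClosure ⟨y, rfl⟩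

theorem isClosed_torusSubgroup : IsClosed (torusSubgroup γ : Set (Fin N → AddCircle (1 : ℝ))) :=
  (orbitHom γ).range.isClosed_topologicalClosure

theorem mFourier_orbitHom (n : Fin N → ℤ) (y : ℝ) :
    mFourier n (orbitHom γ y) = cexp (↑(2 * Real.pi * ∑ k, n k * γ k) * y * I) := by
  simp only [mFourier, ContinuousMap.coe_mk, orbitHom, AddMonoidHom.coe_mk, ZeroHom.coe_mk,
    fourier_coe_apply, ← Complex.exp_sum]
  congr 1
  push_cast
  rw [Finset.mul_sum, Finset.sum_mul, Finset.sum_mul]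
  refine Finset.sum_congr rfl fun k _ => ?_
  ring

theorem mFourier_apply_add (n : Fin N → ℤ) (x x' : Fin N → AddCircle (1 : ℝ)) :
    mFourier n (x + x') = mFourier n x * mFourier n x' := by
  simp only [mFourier, ContinuousMap.coe_mk, Pi.add_apply, fourier_apply, smul_add,
    AddCircle.toCircle_add, Circle.coe_mul, Finset.prod_mul_distrib]

theorem integral_mFourier_of_isHaarOn {ω : Measure (Fin N → AddCircle (1 : ℝ))}
    (hω : IsHaarOn (torusSubgroup γ) ω) (n : Fin N → ℤ) :
    ∫ x, mFourier n x ∂ω = if ∑ k, n k * γ k = 0 then 1 else 0 := by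
  split_ifs with h
  · refine hω.integral_eq_of_eqOn fun x hx => ?_
    have hclosed : IsClosed {x | mFourier n x = 1} := isClosed_eq (by fun_prop) continuous_const
    refine closure_minimal ?_ hclosed hx
    rintro _ ⟨y, rfl⟩
    simp [mFourier_orbitHom, h]
  · set t := ∑ k, n k * γ k
    refine hω.integral_eq_zero_of_add_eq_mul (mFourier n).continuous.aestronglyMeasurable
      (orbitHom_mem_torusSubgroup γ (2 * t)⁻¹) (c := -1) (by norm_num) fun x => ?_
    have : (↑(2 * Real.pi * t) * ↑(2 * t)⁻¹ * I : ℂ) = Real.pi * I := by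
      push_cast
      field_simp [ofReal_ne_zero.mpr h]
    rw [mFourier_apply_add, mFourier_orbitHom, this, exp_pi_mul_I]

end Torus

theorem isClosed_setOf_tendsto_of_eventually_lipschitzWith {ι X α : Type*} [Preorder ι]
    [IsDirectedOrder ι] [Nonempty ι] [PseudoMetricSpace X] [PseudoMetricSpace α] {F : ι → X → α}
    {f : X → α} {K : NNReal} (hF : ∀ᶠ i in atTop, LipschitzWith K (F i)) (hf : Continuous f) :
    IsClosed {x | Tendsto (F · x) atTop (𝓝 (f x))} := by
  obtain ⟨b, hb⟩ := eventually_atTop.mp hF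
  have hequi : Equicontinuous fun i : Set.Ici b => F i :=
    (LipschitzWith.uniformEquicontinuous _ K fun i : Set.Ici b => hb i i.2).equicontinuous
  convert hequi.isClosed_setOfPred_tendsto (l := atTop) hf using 3
  exact tendsto_comp_val_Ici_atTop.symm

section Equidistribution

variable {N : ℕ} (γ : Fin N → ℝ) (ω : Measure (Fin N → AddCircle (1 : ℝ))) [IsFiniteMeasure ω]
  (a : ℝ)

def orbitDiscrepancy (Y : ℝ) : C(UnitAddTorus (Fin N), ℂ) →ₗ[ℂ] ℂ where
  toFun g := (Y : ℂ)⁻¹ * (∫ y in a..Y, g (orbitHom γ y)) - ∫ x, g x ∂ω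
  map_add' g h := by
    have hint (g : C(UnitAddTorus (Fin N), ℂ)) : Integrable g ω :=
      g.continuous.integrable_of_hasCompactSupport (.of_compactSpace _)
    have hint' (g : C(UnitAddTorus (Fin N), ℂ)) :
        IntervalIntegrable (fun y => g (orbitHom γ y)) volume a Y :=
      (g.continuous.comp (continuous_orbitHom γ)).intervalIntegrable a Y
    simp only [ContinuousMap.add_apply, intervalIntegral.integral_add (hint' g) (hint' h),
      integral_add (hint g) (hint h)]
    ring
  map_smul' c g := by
    simp only [ContinuousMap.smul_apply, smul_eq_mul, intervalIntegral.integral_const_mul,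
      integral_const_mul, RingHom.id_apply]
    ring

theorem norm_orbitDiscrepancy_le {Y : ℝ} (hY : |a| + 1 ≤ Y) (g : C(UnitAddTorus (Fin N), ℂ)) :
    ‖orbitDiscrepancy γ ω a Y g‖ ≤ (2 + ω.real Set.univ) * ‖g‖ := by
  have hY0 : 0 < Y := by linarith [abs_nonneg a]
  have htime : ‖(Y : ℂ)⁻¹ * ∫ y in a..Y, g (orbitHom γ y)‖ ≤ 2 * ‖g‖ := by
    have := intervalIntegral.norm_integral_le_of_norm_le_const
      (a := a) (b := Y) fun y _ => g.norm_coe_le_norm (orbitHom γ y)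
    rw [norm_mul, norm_inv, norm_real, Real.norm_of_nonneg hY0.le, inv_mul_le_iff₀ hY0]
    calc _ ≤ ‖g‖ * |Y - a| := this
      _ ≤ ‖g‖ * (2 * Y) := by
          gcongr
          rw [abs_le]
          constructor <;> linarith [neg_abs_le a, le_abs_self a]
      _ = _ := by ring
  have hspace : ‖∫ x, g x ∂ω‖ ≤ ‖g‖ * ω.real Set.univ :=
    norm_integral_le_of_norm_le_const (.of_forall g.norm_coe_le_norm)
  calc _ ≤ ‖(Y : ℂ)⁻¹ * ∫ y in a..Y, g (orbitHom γ y)‖ + ‖∫ x, g x ∂ω‖ := norm_sub_le _ _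
    _ ≤ _ := by linarith

end Equidistribution

theorem tendsto_orbitAverage_of_isHaarOn {N : ℕ} {γ : Fin N → ℝ}
    {ω : Measure (Fin N → AddCircle (1 : ℝ))} (hω : IsHaarOn (torusSubgroup γ) ω) (a : ℝ)
    (g : C(UnitAddTorus (Fin N), ℂ)) :
    Tendsto (fun Y : ℝ => (Y : ℂ)⁻¹ * ∫ y in a..Y, g (orbitHom γ y)) atTop
      (𝓝 (∫ x, g x ∂ω)) := by
  have := hω.1
  rw [← tendsto_sub_nhds_zero_iff]
  set S := {g | Tendsto (fun Y => orbitDiscrepancy γ ω a Y g) atTop (𝓝 0)}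
  have hclosed : IsClosed S :=
    isClosed_setOf_tendsto_of_eventually_lipschitzWith
      ((eventually_ge_atTop (|a| + 1)).mono fun Y hY =>
        AddMonoidHomClass.lipschitz_of_bound _ _ (norm_orbitDiscrepancy_le γ ω a hY))
      continuous_const
  have hspan : ↑(Submodule.span ℂ (Set.range (mFourier (d := Fin N)))) ⊆ S := by
    intro g hg
    induction hg using Submodule.span_induction with
    | mem _ h =>
      obtain ⟨n, rfl⟩ := h
      simp only [S, Set.mem_ofPred_eq, orbitDiscrepancy, LinearMap.coe_mk, AddHom.coe_mk,
        mFourier_orbitHom, integral_mFourier_of_isHaarOn γ hω, tendsto_sub_nhds_zero_iff]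
      convert tendsto_inv_mul_integral_exp_mul_I _ a using 2
      simp [Real.pi_ne_zero]
    | zero => simp [S]
    | add g h _ _ hg hh => simpa [S] using hg.add hh
    | smul c g _ hg => simpa [S] using hg.const_smul c
  refine closure_minimal hspan hclosed ?_
  rw [← Submodule.topologicalClosure_coe, span_mFourier_closure_eq_top]
  trivial

theorem tendsto_orbitAverage_of_isHaarOn_real {N : ℕ} {γ : Fin N → ℝ}
    {ω : Measure (Fin N → AddCircle (1 : ℝ))} (hω : IsHaarOn (torusSubgroup γ) ω) (a : ℝ)
    (g : C(UnitAddTorus (Fin N), ℝ)) :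
    Tendsto (fun Y : ℝ => Y⁻¹ * ∫ y in a..Y, g (orbitHom γ y)) atTop (𝓝 (∫ x, g x ∂ω)) := by
  rw [← tendsto_ofReal_iff]
  simpa [integral_complex_ofReal, intervalIntegral.integral_ofReal] using
    tendsto_orbitAverage_of_isHaarOn hω a ((⟨ofReal, continuous_ofReal⟩ : C(ℝ, ℂ)).comp g)

theorem toCircle_orbitHom_div_two_pi {N : ℕ} (γ : Fin N → ℝ) (y : ℝ) (k : Fin N) :
    ((orbitHom (fun k => γ k / (2 * Real.pi)) y k).toCircle : ℂ) = cexp (I * (γ k * y)) := by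
  simp only [orbitHom, AddMonoidHom.coe_mk, ZeroHom.coe_mk, AddCircle.toCircle_apply_mk,
    Circle.coe_exp]
  congr 1
  push_cast
  field_simp [Real.pi_ne_zero]

theorem stmt6_general (N : ℕ) (β m : ℝ) (γ : Fin N → ℝ) (c : Fin N → ℂ) :
    ∃ ω : Measure (Fin N → AddCircle (1 : ℝ)),
      IsHaarOn (torusSubgroup (fun k => γ k / (2 * Real.pi))) ω ∧
      HasLimitingLogDistribution
        (fun x : ℝ => m - ∑ k, 2 * (c k * Complex.exp (I * (γ k * Real.log x)) /
          ((β : ℂ) + I * (γ k : ℂ))).re)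
        (ω.map (fun θ : Fin N → AddCircle (1 : ℝ) =>
          m - ∑ k, 2 * (c k * ((θ k).toCircle : ℂ) / ((β : ℂ) + I * (γ k : ℂ))).re)) := by
  obtain ⟨ω, hω⟩ := exists_isHaarOn (isClosed_torusSubgroup fun k => γ k / (2 * Real.pi))
  have := hω.1
  let f : C(UnitAddTorus (Fin N), ℝ) :=
    ⟨fun θ => m - ∑ k, 2 * (c k * ((θ k).toCircle : ℂ) / ((β : ℂ) + I * (γ k : ℂ))).re,
      by fun_prop⟩
  refine ⟨ω, hω, Measure.isProbabilityMeasure_map f.continuous.aemeasurable,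
    fun g ⟨_, hg⟩ _ => ?_⟩
  have hlim := tendsto_orbitAverage_of_isHaarOn_real hω 2 ((⟨g, hg.continuous⟩ : C(ℝ, ℝ)).comp f)
  convert hlim using 2
  · simp [toCircle_orbitHom_div_two_pi, f]
  · exact integral_map f.continuous.aemeasurable hg.continuous.aestronglyMeasurable

/-- `G(x) = m − Σ_k 2 Re(c_k e^{iγ_k log x}/(β + iγ_k))` has a limiting logarithmic
distribution `μ`, namely the pushforward of the normalized Haar measure on
`A(γ₁/2π,…,γ_N/2π)` under `(θ₁,…,θ_N) ↦ m − Σ_k 2 Re(c_k e^{2πiθ_k}/(β + iγ_k))`. -/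
theorem stmt6 (N : ℕ) (β m : ℝ) (hβ : 0 < β) (γ : Fin N → ℝ)
    (hpos : ∀ k, 0 < γ k) (hinj : Function.Injective γ) (c : Fin N → ℂ) :
    ∃ ω : Measure (Fin N → AddCircle (1 : ℝ)),
      IsHaarOn (torusSubgroup (fun k => γ k / (2 * Real.pi))) ω ∧
      HasLimitingLogDistribution
        (fun x : ℝ => m - ∑ k, 2 * (c k * Complex.exp (I * (γ k * Real.log x)) /
          ((β : ℂ) + I * (γ k : ℂ))).re)
        (ω.map (fun θ : Fin N → AddCircle (1 : ℝ) =>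
          m - ∑ k, 2 * (c k * ((θ k).toCircle : ℂ) / ((β : ℂ) + I * (γ k : ℂ))).re)) :=
  stmt6_general N β m γ c
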